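/- arXiv:2106.14950 — 4 statements merged into one kernel-verified Lean document; each statement's English description precedes it below -/
import Mathlib

section
/- Let s ∈ [2,∞) and n ∈ ℕ*. Then there exists a constant C > 0 depending only on s such that for all x, y ∈ ℝⁿ, (‖x‖^(s-2)x − ‖y‖^(s-2)y) · (x − y) ≥ C·‖x − y‖^s, i.e., the s-power-framed function is Hölder monotone in the sense of equation (eq:s.power:strong.mono) with s̃ = 2. -/
/-!
Write `A = ‖x‖^(s-2)` and `B = ‖y‖^(s-2)`. Polarisation gives
`⟪A x - B y, x - y⟫ = (A + B)/2 ‖x - y‖² + (A - B)(‖x‖² - ‖y‖²)/2`, and the last term is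
nonnegative because `t ↦ t^(s-2)` and `t ↦ t²` are both nondecreasing on `[0, ∞)`. Since
`‖x - y‖ ≤ ‖x‖ + ‖y‖ ≤ 2 max(‖x‖, ‖y‖)`, one has `‖x - y‖^(s-2) ≤ 2^(s-2) (A + B)`, and
multiplying by `‖x - y‖²` yields the bound with `C = 2^(1-s)`.
-/

open Real RealInnerProductSpace

lemma Real.rpow_add_le_two_rpow_mul_add_rpow {a b p : ℝ} (ha : 0 ≤ a) (hb : 0 ≤ b) (hp : 0 ≤ p) :
    (a + b) ^ p ≤ 2 ^ p * (a ^ p + b ^ p) := by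
  have hmax : 0 ≤ max a b := le_max_of_le_left ha
  calc (a + b) ^ p ≤ (2 * max a b) ^ p := by
        gcongr
        linarith [le_max_left a b, le_max_right a b]
    _ = 2 ^ p * max (a ^ p) (b ^ p) := by
        rw [mul_rpow zero_le_two hmax, (monotoneOn_rpow_Ici_of_exponent_nonneg hp).map_max ha hb]
    _ ≤ 2 ^ p * (a ^ p + b ^ p) := by
        gcongr
        exact max_le_add_of_nonneg (rpow_nonneg ha p) (rpow_nonneg hb p)

lemma norm_sub_rpow_le_two_rpow_mul_add {E : Type*} [SeminormedAddCommGroup E] {p : ℝ}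
    (hp : 0 ≤ p) (x y : E) :
    ‖x - y‖ ^ p ≤ 2 ^ p * (‖x‖ ^ p + ‖y‖ ^ p) :=
  (rpow_le_rpow (norm_nonneg _) (norm_sub_le x y) hp).trans
    (rpow_add_le_two_rpow_mul_add_rpow (norm_nonneg x) (norm_nonneg y) hp)

section InnerProductSpace

variable {E : Type*} [NormedAddCommGroup E] [InnerProductSpace ℝ E]

lemma real_inner_smul_sub_smul_sub_eq (a b : ℝ) (x y : E) :
    ⟪a • x - b • y, x - y⟫ =
      (a + b) / 2 * ‖x - y‖ ^ 2 + (a - b) * (‖x‖ ^ 2 - ‖y‖ ^ 2) / 2 := by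
  rw [norm_sub_sq_real]
  simp only [inner_sub_left, inner_sub_right, real_inner_smul_left, real_inner_self_eq_norm_sq,
    real_inner_comm x y]
  ring

lemma half_mul_norm_sub_sq_le_inner_rpow_smul_sub {p : ℝ} (hp : 0 ≤ p) (x y : E) :
    (‖x‖ ^ p + ‖y‖ ^ p) / 2 * ‖x - y‖ ^ 2 ≤ ⟪‖x‖ ^ p • x - ‖y‖ ^ p • y, x - y⟫ := by
  have hmono : 0 ≤ (‖x‖ ^ p - ‖y‖ ^ p) * (‖x‖ ^ 2 - ‖y‖ ^ 2) := by
    rcases le_total ‖x‖ ‖y‖ with h | h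
    · exact mul_nonneg_of_nonpos_of_nonpos
        (sub_nonpos.2 (rpow_le_rpow (norm_nonneg x) h hp))
        (sub_nonpos.2 (pow_le_pow_left₀ (norm_nonneg x) h 2))
    · exact mul_nonneg
        (sub_nonneg.2 (rpow_le_rpow (norm_nonneg y) h hp))
        (sub_nonneg.2 (pow_le_pow_left₀ (norm_nonneg y) h 2))
  rw [real_inner_smul_sub_smul_sub_eq]
  linarith

lemma two_rpow_one_sub_mul_norm_sub_rpow_le_inner {s : ℝ} (hs : 2 ≤ s) (x y : E) :
    2 ^ (1 - s) * ‖x - y‖ ^ s ≤ ⟪‖x‖ ^ (s - 2) • x - ‖y‖ ^ (s - 2) • y, x - y⟫ := by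
  have hp : 0 ≤ s - 2 := by linarith
  have hsplit : ‖x - y‖ ^ s = ‖x - y‖ ^ (s - 2) * ‖x - y‖ ^ 2 := by
    rw [← rpow_natCast, ← rpow_add' (norm_nonneg _) (by norm_num; linarith)]
    norm_num
  have htwo : (2 : ℝ) ^ (1 - s) * 2 ^ (s - 2) = 1 / 2 := by
    rw [← rpow_add zero_lt_two, show 1 - s + (s - 2) = -1 by ring, rpow_neg_one]
    norm_num
  calc 2 ^ (1 - s) * ‖x - y‖ ^ s
      = 2 ^ (1 - s) * ‖x - y‖ ^ (s - 2) * ‖x - y‖ ^ 2 := by rw [hsplit, mul_assoc]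
    _ ≤ 2 ^ (1 - s) * (2 ^ (s - 2) * (‖x‖ ^ (s - 2) + ‖y‖ ^ (s - 2))) * ‖x - y‖ ^ 2 := by
        gcongr
        exact norm_sub_rpow_le_two_rpow_mul_add hp x y
    _ = (‖x‖ ^ (s - 2) + ‖y‖ ^ (s - 2)) / 2 * ‖x - y‖ ^ 2 := by
        rw [← mul_assoc, htwo]
        ring
    _ ≤ _ := half_mul_norm_sub_sq_le_inner_rpow_smul_sub hp x y

end InnerProductSpace

/-- Hölder monotonicity (coercivity) of the `s`-power-framed function
`x ↦ ‖x‖^(s-2) x` for `s ≥ 2`, with a constant depending only on `s`. -/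
theorem s_power_framed_holder_monotonicity (s : ℝ) (hs : 2 ≤ s) :
    ∃ C > 0, ∀ (n : ℕ), 0 < n → ∀ x y : EuclideanSpace ℝ (Fin n),
      (inner ℝ ((‖x‖ ^ (s - 2)) • x - (‖y‖ ^ (s - 2)) • y) (x - y) : ℝ) ≥
        C * ‖x - y‖ ^ s :=
  ⟨2 ^ (1 - s), by positivity, fun _ _ x y => two_rpow_one_sub_mul_norm_sub_rpow_le_inner hs x y⟩
end

section
/- Let s ∈ (1,2) and n ∈ ℕ*. Then there exists a constant C > 0 depending only on s such that for all x, y ∈ ℝⁿ with (x,y) ≠ (0,0), (‖x‖^(s-2)x − ‖y‖^(s-2)y) · (x − y) ≥ C·(‖x‖^s + ‖y‖^s)^((s-2)/s)·‖x − y‖². -/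
open Real

private lemma bern_aux (p r : ℝ) (hp0 : 0 < p) (hp1 : p < 1) (hr0 : 0 ≤ r) :
    r ^ p ≤ p * r + (1 - p) := by
  have h := Real.geom_mean_le_arith_mean2_weighted (w₁ := p) (w₂ := 1 - p)
      (p₁ := r) (p₂ := 1) hp0.le (by linarith) hr0 zero_le_one (by ring)
  simpa using h

private lemma rpow_sub_two_mul_sq (s b : ℝ) (hb : 0 ≤ b) (hs : 0 < s) (hs2 : s < 2) :
    b ^ (s - 2) * b ^ 2 = b ^ s := by
  rcases eq_or_lt_of_le hb with h | h
  · rw [← h, Real.zero_rpow (by linarith), Real.zero_rpow (ne_of_gt hs)]; ring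
  · have : b ^ (2:ℕ) = b ^ ((2:ℕ) : ℝ) := (Real.rpow_natCast b 2).symm
    rw [this, ← Real.rpow_add h]
    norm_num

private lemma rkey (s a b t : ℝ) (hs1 : 1 < s) (hs2 : s < 2) (hb : 0 ≤ b) (hba : b ≤ a)
    (ht : t ≤ a * b) :
    (s - 1) / 2 * a ^ (s - 2) * (a ^ 2 + b ^ 2 - 2 * t) ≤
      a ^ s + b ^ s - (a ^ (s - 2) + b ^ (s - 2)) * t := by
  have ha0 : (0:ℝ) ≤ a := hb.trans hba
  rcases eq_or_lt_of_le ha0 with h | ha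
  · have hb0 : b = 0 := le_antisymm (hba.trans_eq h.symm) hb
    rw [← h, hb0, Real.zero_rpow (by linarith : s - 2 ≠ 0),
      Real.zero_rpow (by linarith : s ≠ 0)]
    nlinarith
  have hA2 : (0:ℝ) < a ^ (s - 2) := Real.rpow_pos_of_pos ha _
  have hAs : a ^ (s - 2) * a ^ 2 = a ^ s := rpow_sub_two_mul_sq s a ha0 (by linarith) hs2
  have hBs : b ^ (s - 2) * b ^ 2 = b ^ s := rpow_sub_two_mul_sq s b hb (by linarith) hs2
  have hA1 : a ^ (s - 1) = a ^ (s - 2) * a := by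
    rw [show s - 1 = s - 2 + 1 by ring, Real.rpow_add_one (ne_of_gt ha)]
  rcases eq_or_lt_of_le hb with hb0 | hbpos
  · -- b = 0
    rw [← hb0, Real.zero_rpow (by linarith : s - 2 ≠ 0),
      Real.zero_rpow (by linarith : s ≠ 0)]
    have ht0 : t ≤ 0 := by simpa [← hb0] using ht
    nlinarith [hAs, mul_nonneg hA2.le (neg_nonneg.mpr ht0), mul_nonneg hA2.le (sq_nonneg a)]
  have hB2 : (0:ℝ) < b ^ (s - 2) := Real.rpow_pos_of_pos hbpos _
  have hB1 : b ^ (s - 1) = b ^ (s - 2) * b := by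
    rw [show s - 1 = s - 2 + 1 by ring, Real.rpow_add_one (ne_of_gt hbpos)]
  -- Bernoulli-type bound: b^(s-1) ≤ (s-1)*b*a^(s-2) + (2-s)*a^(s-1)
  have hineq : b ^ (s - 1) ≤ (s - 1) * (b * a ^ (s - 2)) + (2 - s) * a ^ (s - 1) := by
    have h1 : (b / a) ^ (s - 1) ≤ (s - 1) * (b / a) + (2 - s) := by
      have := bern_aux (s - 1) (b / a) (by linarith) (by linarith) (by positivity)
      linarith [this]
    have h2 : (b / a) ^ (s - 1) * a ^ (s - 1) = b ^ (s - 1) := by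
      rw [← Real.mul_rpow (by positivity) ha.le, div_mul_cancel₀ _ (ne_of_gt ha)]
    have h3 := mul_le_mul_of_nonneg_right h1 (Real.rpow_nonneg ha0 (s - 1))
    rw [h2] at h3
    have h4 : ((s - 1) * (b / a) + (2 - s)) * a ^ (s - 1)
        = (s - 1) * (b * a ^ (s - 2)) + (2 - s) * a ^ (s - 1) := by
      rw [hA1]; field_simp
    linarith [h4 ▸ h3]
  -- inner part of term 2
  have h5 : b ^ (s - 2) * b ≤ (s - 1) * (b * a ^ (s - 2)) + (2 - s) * (a ^ (s - 2) * a) := by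
    rw [← hB1, ← hA1]; exact hineq
  have hterm2 : 0 ≤ a ^ (s - 2) * a - b ^ (s - 2) * b - (s - 1) / 2 * a ^ (s - 2) * (a - b) := by
    nlinarith [mul_nonneg hA2.le (sub_nonneg.mpr hba)]
  have hterm1 : 0 ≤ (a * b - t) * ((2 - s) * a ^ (s - 2) + b ^ (s - 2)) := by
    apply mul_nonneg (by linarith)
    nlinarith [hA2, hB2]
  nlinarith [mul_nonneg (sub_nonneg.mpr hba) hterm2, hterm1, hAs, hBs]

private lemma aux_main (s : ℝ) (hs1 : 1 < s) (hs2 : s < 2) {n : ℕ}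
    (x y : EuclideanSpace ℝ (Fin n)) (hxy : ‖y‖ ≤ ‖x‖) (hx : x ≠ 0) :
    (s - 1) / 2 * ‖x‖ ^ (s - 2) * ‖x - y‖ ^ 2 ≤
      (inner ℝ ((‖x‖ ^ (s - 2)) • x - (‖y‖ ^ (s - 2)) • y) (x - y) : ℝ) := by
  have hxn : (0:ℝ) < ‖x‖ := norm_pos_iff.mpr hx
  have hyn : (0:ℝ) ≤ ‖y‖ := norm_nonneg y
  have expand : (inner ℝ ((‖x‖ ^ (s - 2)) • x - (‖y‖ ^ (s - 2)) • y) (x - y) : ℝ)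
      = ‖x‖ ^ (s - 2) * ‖x‖ ^ 2 + ‖y‖ ^ (s - 2) * ‖y‖ ^ 2
        - (‖x‖ ^ (s - 2) + ‖y‖ ^ (s - 2)) * (inner ℝ x y : ℝ) := by
    simp only [inner_sub_left, inner_sub_right, real_inner_smul_left,
      real_inner_self_eq_norm_sq, real_inner_comm y x]
    ring
  have hkey := rkey s ‖x‖ ‖y‖ (inner ℝ x y : ℝ) hs1 hs2 hyn hxy (real_inner_le_norm x y)
  have hAs : ‖x‖ ^ (s - 2) * ‖x‖ ^ 2 = ‖x‖ ^ s :=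
    rpow_sub_two_mul_sq s ‖x‖ hxn.le (by linarith) hs2
  have hBs : ‖y‖ ^ (s - 2) * ‖y‖ ^ 2 = ‖y‖ ^ s :=
    rpow_sub_two_mul_sq s ‖y‖ hyn (by linarith) hs2
  have hns : ‖x - y‖ ^ 2 = ‖x‖ ^ 2 - 2 * (inner ℝ x y : ℝ) + ‖y‖ ^ 2 := norm_sub_sq_real x y
  rw [expand, hns]
  rw [← hAs, ← hBs] at hkey
  linarith [hkey]

/-- Hölder monotonicity of the `s`-power-framed function `x ↦ ‖x‖^(s-2) x` for
`s ∈ (1,2)`, with a constant depending only on `s`. -/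
theorem s_power_framed_holder_monotonicity_singular (s : ℝ) (hs1 : 1 < s) (hs2 : s < 2) :
    ∃ C > 0, ∀ (n : ℕ), 0 < n → ∀ x y : EuclideanSpace ℝ (Fin n),
      ¬(x = 0 ∧ y = 0) →
      (inner ℝ ((‖x‖ ^ (s - 2)) • x - (‖y‖ ^ (s - 2)) • y) (x - y) : ℝ) ≥
        C * (‖x‖ ^ s + ‖y‖ ^ s) ^ ((s - 2) / s) * ‖x - y‖ ^ (2 : ℕ) := by
  refine ⟨(s - 1) / 2, by linarith, ?_⟩
  intro n hn x y hne
  -- comparison lemma: (a^s + b^s)^((s-2)/s) ≤ M^(s-2) where M = max norm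
  have comp : ∀ a b : ℝ, 0 < a → 0 ≤ b → b ≤ a →
      (a ^ s + b ^ s) ^ ((s - 2) / s) ≤ a ^ (s - 2) := by
    intro a b ha hb _
    have has : (0:ℝ) < a ^ s := Real.rpow_pos_of_pos ha s
    have hbs : (0:ℝ) ≤ b ^ s := Real.rpow_nonneg hb s
    have h1 : (a ^ s + b ^ s) ^ ((s - 2) / s) ≤ (a ^ s) ^ ((s - 2) / s) :=
      Real.rpow_le_rpow_of_nonpos has (by linarith) (by
        apply div_nonpos_of_nonpos_of_nonneg <;> linarith)
    have h2 : (a ^ s) ^ ((s - 2) / s) = a ^ (s - 2) := by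
      rw [← Real.rpow_mul ha.le]
      congr 1
      field_simp
    linarith [h1, h2.le]
  rcases le_total ‖y‖ ‖x‖ with h | h
  · have hx : x ≠ 0 := fun hx0 =>
      hne ⟨hx0, norm_le_zero_iff.mp (by simpa [hx0] using h)⟩
    have hxn : (0:ℝ) < ‖x‖ := norm_pos_iff.mpr hx
    have hmain := aux_main s hs1 hs2 x y h hx
    have hcomp := comp ‖x‖ ‖y‖ hxn (norm_nonneg y) h
    have hC : (0:ℝ) < (s - 1) / 2 := by linarith
    have hstep : (s - 1) / 2 * (‖x‖ ^ s + ‖y‖ ^ s) ^ ((s - 2) / s) * ‖x - y‖ ^ (2:ℕ)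
        ≤ (s - 1) / 2 * ‖x‖ ^ (s - 2) * ‖x - y‖ ^ (2:ℕ) := by
      apply mul_le_mul_of_nonneg_right _ (by positivity)
      exact mul_le_mul_of_nonneg_left hcomp hC.le
    calc (s - 1) / 2 * (‖x‖ ^ s + ‖y‖ ^ s) ^ ((s - 2) / s) * ‖x - y‖ ^ (2:ℕ)
        ≤ (s - 1) / 2 * ‖x‖ ^ (s - 2) * ‖x - y‖ ^ (2:ℕ) := hstep
      _ ≤ _ := hmain
  · have hy : y ≠ 0 := by
      intro hy0
      apply hne
      refine ⟨?_, hy0⟩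
      exact norm_le_zero_iff.mp (by simpa [hy0] using h)
    have hyn : (0:ℝ) < ‖y‖ := norm_pos_iff.mpr hy
    have hmain := aux_main s hs1 hs2 y x h hy
    have hcomp := comp ‖y‖ ‖x‖ hyn (norm_nonneg x) h
    have hC : (0:ℝ) < (s - 1) / 2 := by linarith
    have hsym : (inner ℝ ((‖x‖ ^ (s - 2)) • x - (‖y‖ ^ (s - 2)) • y) (x - y) : ℝ)
        = (inner ℝ ((‖y‖ ^ (s - 2)) • y - (‖x‖ ^ (s - 2)) • x) (y - x) : ℝ) := by
      rw [show (‖x‖ ^ (s - 2)) • x - (‖y‖ ^ (s - 2)) • y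
            = -((‖y‖ ^ (s - 2)) • y - (‖x‖ ^ (s - 2)) • x) by abel,
          show x - y = -(y - x) by abel, inner_neg_neg]
    have hnrm : ‖x - y‖ = ‖y - x‖ := norm_sub_rev x y
    rw [hsym, hnrm, add_comm (‖x‖ ^ s)]
    calc (s - 1) / 2 * (‖y‖ ^ s + ‖x‖ ^ s) ^ ((s - 2) / s) * ‖y - x‖ ^ (2:ℕ)
        ≤ (s - 1) / 2 * ‖y‖ ^ (s - 2) * ‖y - x‖ ^ (2:ℕ) := by
          apply mul_le_mul_of_nonneg_right _ (by positivity)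
          exact mul_le_mul_of_nonneg_left hcomp hC.le
      _ ≤ _ := hmain
end

section
/- For all vectors u, w ∈ ℝ^d \ {0} and all s ∈ ℝ, the operator norm (or Frobenius norm) bound holds: ‖w‖^(s-1)·| ‖u‖^(-2) u⊗u − ‖w‖^(-2) w⊗w |_F ≤ 4·| ‖u‖^(s-2)u − ‖w‖^(s-2)w |, where |·|_F is the Frobenius norm and u⊗u the outer product. -/
open Real

/-- Outer product of two vectors. -/
def vecOuter {d : ℕ} (x y : EuclideanSpace ℝ (Fin d)) : Fin d → Fin d → ℝ :=
  fun i j => x i * y j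

/-- Frobenius norm of a `d × d` real matrix. -/
noncomputable def frobNorm {d : ℕ} (A : Fin d → Fin d → ℝ) : ℝ :=
  Real.sqrt (∑ i, ∑ j, (A i j) ^ 2)

/-- Frobenius-norm bound for differences of outer squares of unit vectors. -/
lemma frobNorm_outer_sub_outer_le {d : ℕ} (x y : EuclideanSpace ℝ (Fin d))
    (hx : ‖x‖ = 1) (hy : ‖y‖ = 1) :
    frobNorm (vecOuter x x - vecOuter y y) ≤ Real.sqrt 2 * ‖x - y‖ := by
  set T : ℝ := ∑ i, x i * y i with hTdef
  have hTi : (inner ℝ x y : ℝ) = T := by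
    simp [PiLp.inner_apply, RCLike.inner_apply, hTdef, mul_comm]
  have hxx : ∑ i, x i * x i = 1 := by
    have h := real_inner_self_eq_norm_sq x
    rw [hx, PiLp.inner_apply] at h
    simpa [PiLp.inner_apply, RCLike.inner_apply, pow_two] using h
  have hyy : ∑ i, y i * y i = 1 := by
    have h := real_inner_self_eq_norm_sq y
    rw [hy, PiLp.inner_apply] at h
    simpa [PiLp.inner_apply, RCLike.inner_apply, pow_two] using h
  have hxx' : ∑ i, (x i) ^ 2 = 1 := by simpa only [pow_two] using hxx
  have hyy' : ∑ i, (y i) ^ 2 = 1 := by simpa only [pow_two] using hyy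
  have hT1 : |T| ≤ 1 := by
    have := abs_real_inner_le_norm x y
    rw [hx, hy, hTi] at this; simpa using this
  have hnsq : ‖x - y‖ ^ 2 = 2 - 2 * T := by
    rw [@norm_sub_sq_real, hx, hy, hTi]; ring
  have e0 : ∀ i, ∑ j, (x i * x j - y i * y j) ^ 2
      = (x i) ^ 2 - (2 * T) * (x i * y i) + (y i) ^ 2 := by
    intro i
    have h1 : ∀ j ∈ Finset.univ, (x i * x j - y i * y j) ^ 2
        = (x i ^ 2) * (x j * x j) - (2 * (x i * y i)) * (x j * y j) + (y i ^ 2) * (y j * y j) :=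
      fun j _ => by ring
    rw [Finset.sum_congr rfl h1, Finset.sum_add_distrib, Finset.sum_sub_distrib,
      ← Finset.mul_sum, ← Finset.mul_sum, ← Finset.mul_sum, hxx, hyy, ← hTdef]
    ring
  have hsum : ∑ i, ∑ j, ((vecOuter x x - vecOuter y y) i j) ^ 2 = 2 - 2 * T ^ 2 := by
    have h2 : ∀ i ∈ Finset.univ, ∑ j, ((vecOuter x x - vecOuter y y) i j) ^ 2
        = (x i) ^ 2 - (2 * T) * (x i * y i) + (y i) ^ 2 := by
      intro i _
      rw [← e0 i]
      exact Finset.sum_congr rfl fun j _ => by simp [vecOuter, Pi.sub_apply]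
    rw [Finset.sum_congr rfl h2, Finset.sum_add_distrib, Finset.sum_sub_distrib,
      ← Finset.mul_sum, hxx', hyy', ← hTdef]
    ring
  rw [frobNorm, hsum]
  have h1 : 2 - 2 * T ^ 2 ≤ 2 * (2 - 2 * T) := by nlinarith [abs_le.mp hT1]
  calc Real.sqrt (2 - 2 * T ^ 2) ≤ Real.sqrt (2 * (2 - 2 * T)) := Real.sqrt_le_sqrt h1
    _ = Real.sqrt 2 * Real.sqrt (2 - 2 * T) := Real.sqrt_mul (by norm_num) _
    _ = Real.sqrt 2 * ‖x - y‖ := by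
        rw [← hnsq, Real.sqrt_sq (norm_nonneg _)]

/-- Key algebraic inequality used to estimate the term `T₄` in the proof of the
Hölder continuity of the convective function `c`:
`‖w‖^(s-1) · |‖u‖⁻² u⊗u − ‖w‖⁻² w⊗w|_F ≤ 4 · |‖u‖^(s-2) u − ‖w‖^(s-2) w|`. -/
theorem outer_product_frobenius_bound {d : ℕ} (s : ℝ)
    (u w : EuclideanSpace ℝ (Fin d)) (hu : u ≠ 0) (hw : w ≠ 0) :
    ‖w‖ ^ (s - 1) *
        frobNorm ((‖u‖ ^ (-2 : ℝ)) • vecOuter u u - (‖w‖ ^ (-2 : ℝ)) • vecOuter w w) ≤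
      4 * ‖(‖u‖ ^ (s - 2)) • u - (‖w‖ ^ (s - 2)) • w‖ := by
  have ha : (0:ℝ) < ‖u‖ := norm_pos_iff.mpr hu
  have hb : (0:ℝ) < ‖w‖ := norm_pos_iff.mpr hw
  set x : EuclideanSpace ℝ (Fin d) := ‖u‖⁻¹ • u with hxdef
  set y : EuclideanSpace ℝ (Fin d) := ‖w‖⁻¹ • w with hydef
  have hx : ‖x‖ = 1 := norm_smul_inv_norm hu
  have hy : ‖y‖ = 1 := norm_smul_inv_norm hw
  set α : ℝ := ‖u‖ ^ (s - 1) with hαdef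
  set β : ℝ := ‖w‖ ^ (s - 1) with hβdef
  have hα : (0:ℝ) < α := Real.rpow_pos_of_pos ha _
  have hβ : (0:ℝ) < β := Real.rpow_pos_of_pos hb _
  -- Rewrite the matrix as a difference of outer squares of unit vectors
  have hmatu : (‖u‖ ^ (-2:ℝ)) • vecOuter u u = vecOuter x x := by
    have hneg2 : ‖u‖ ^ (-2:ℝ) = ‖u‖⁻¹ * ‖u‖⁻¹ := by
      rw [show (-2:ℝ) = (-1) + (-1) by norm_num, Real.rpow_add ha, Real.rpow_neg_one]
    funext i j
    simp only [vecOuter, Pi.smul_apply, smul_eq_mul, hxdef, PiLp.smul_apply, hneg2]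
    ring
  have hmatw : (‖w‖ ^ (-2:ℝ)) • vecOuter w w = vecOuter y y := by
    have hneg2 : ‖w‖ ^ (-2:ℝ) = ‖w‖⁻¹ * ‖w‖⁻¹ := by
      rw [show (-2:ℝ) = (-1) + (-1) by norm_num, Real.rpow_add hb, Real.rpow_neg_one]
    funext i j
    simp only [vecOuter, Pi.smul_apply, smul_eq_mul, hydef, PiLp.smul_apply, hneg2]
    ring
  -- Rewrite the right-hand side vector
  have hαx : α • x = (‖u‖ ^ (s - 2)) • u := by
    rw [hxdef, smul_smul, hαdef, ← Real.rpow_neg_one ‖u‖, ← Real.rpow_add ha,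
      show s - 1 + -1 = s - 2 by ring]
  have hβy : β • y = (‖w‖ ^ (s - 2)) • w := by
    rw [hydef, smul_smul, hβdef, ← Real.rpow_neg_one ‖w‖, ← Real.rpow_add hb,
      show s - 1 + -1 = s - 2 by ring]
  set N : ℝ := ‖(‖u‖ ^ (s - 2)) • u - (‖w‖ ^ (s - 2)) • w‖ with hNdef
  have hN : N = ‖α • x - β • y‖ := by rw [hNdef, hαx, hβy]
  have hNnn : 0 ≤ N := norm_nonneg _
  -- norms of the scaled unit vectors
  have hnαx : ‖α • x‖ = α := by
    rw [norm_smul, hx, Real.norm_eq_abs, abs_of_pos hα]; ring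
  have hnβy : ‖β • y‖ = β := by
    rw [norm_smul, hy, Real.norm_eq_abs, abs_of_pos hβ]; ring
  -- |α - β| ≤ N
  have habs : |α - β| ≤ N := by
    have h := abs_norm_sub_norm_le (α • x) (β • y)
    rw [hnαx, hnβy] at h
    rw [hN]; exact h
  -- β * ‖x - y‖ ≤ 2 * N
  have hkey : β * ‖x - y‖ ≤ 2 * N := by
    have h1 : β * ‖x - y‖ = ‖β • x - β • y‖ := by
      rw [← smul_sub, norm_smul, Real.norm_eq_abs, abs_of_pos hβ]
    have h2 : β • x - β • y = (α • x - β • y) - (α - β) • x := by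
      rw [sub_smul]; abel
    have h3 : ‖(α - β) • x‖ = |α - β| := by
      rw [norm_smul, hx, Real.norm_eq_abs]; ring
    calc β * ‖x - y‖ = ‖(α • x - β • y) - (α - β) • x‖ := by rw [h1, h2]
      _ ≤ ‖α • x - β • y‖ + ‖(α - β) • x‖ := norm_sub_le _ _
      _ = N + |α - β| := by rw [h3, hN]
      _ ≤ N + N := by linarith
      _ = 2 * N := by ring
  -- assemble
  have hsqrt2 : Real.sqrt 2 ≤ 2 := by
    nlinarith [Real.sq_sqrt (by norm_num : (2:ℝ) ≥ 0), Real.sqrt_nonneg 2]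
  rw [hmatu, hmatw]
  calc β * frobNorm (vecOuter x x - vecOuter y y)
      ≤ β * (Real.sqrt 2 * ‖x - y‖) := by
        exact mul_le_mul_of_nonneg_left (frobNorm_outer_sub_outer_le x y hx hy) hβ.le
    _ = Real.sqrt 2 * (β * ‖x - y‖) := by ring
    _ ≤ Real.sqrt 2 * (2 * N) := by
        exact mul_le_mul_of_nonneg_left hkey (Real.sqrt_nonneg 2)
    _ ≤ 2 * (2 * N) := by
        have : 0 ≤ 2 * N := by linarith
        exact mul_le_mul_of_nonneg_right hsqrt2 this
    _ = 4 * N := by ring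
end

section
/- Let r ∈ (1,2], n ∈ ℕ*, δ ≥ 0. Then there exists C > 0 depending only on r such that for all x, y ∈ ℝⁿ, |(δ + ‖x‖)^(r−2) x − (δ + ‖y‖)^(r−2) y| ≤ C (δ^r + ‖x‖^r + ‖y‖^r)^((r−2)/r) ‖x − y‖. -/
open Real

private lemma real_add_rpow {p a b : ℝ} (ha : 0 ≤ a) (hb : 0 ≤ b) (hp : 1 ≤ p) :
    a ^ p + b ^ p ≤ (a + b) ^ p := by
  have hp0 : p ≠ 0 := by linarith
  rcases eq_or_lt_of_le (by positivity : (0:ℝ) ≤ a + b) with h | h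
  · have ha0 : a = 0 := by linarith
    have hb0 : b = 0 := by linarith
    simp [ha0, hb0, zero_rpow hp0]
  · have key : ∀ c : ℝ, 0 ≤ c → c ≤ a + b → c ^ p ≤ (a + b) ^ (p - 1) * c := by
      intro c hc hcab
      rcases eq_or_lt_of_le hc with h0 | h0
      · simp [← h0, zero_rpow hp0]
      · have : c ^ p = c ^ (p - 1) * c := by
          rw [← rpow_add_one h0.ne' (p - 1), sub_add_cancel]
        rw [this]
        exact mul_le_mul_of_nonneg_right (rpow_le_rpow hc hcab (by linarith)) hc
    have h1 := key a ha (by linarith)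
    have h2 := key b hb (by linarith)
    have : (a + b) ^ p = (a + b) ^ (p - 1) * (a + b) := by
      rw [← rpow_add_one h.ne' (p - 1), sub_add_cancel]
    rw [this]
    linarith [h1, h2]

/-- monotonicity of `u ↦ (δ+u)^(r-2) * u` for `1 < r ≤ 2`. -/
private lemma gmono {r δ s t : ℝ} (hr1 : 1 < r) (hδ : 0 ≤ δ) (hs : 0 ≤ s) (hst : s ≤ t) :
    (δ + s) ^ (r - 2) * s ≤ (δ + t) ^ (r - 2) * t := by
  have ht : 0 ≤ t := le_trans hs hst
  rcases eq_or_lt_of_le (by positivity : (0:ℝ) ≤ δ + s) with h | h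
  · have hs0 : s = 0 := by linarith
    rw [hs0, mul_zero]
    positivity
  · have hvt : 0 < δ + t := by linarith
    have e1 : (δ + s) ^ (r - 2) * s = (δ + s) ^ (r - 1) * (s / (δ + s)) := by
      rw [show r - 1 = (r - 2) + 1 by ring, rpow_add_one h.ne']
      field_simp
    have e2 : (δ + t) ^ (r - 2) * t = (δ + t) ^ (r - 1) * (t / (δ + t)) := by
      rw [show r - 1 = (r - 2) + 1 by ring, rpow_add_one hvt.ne']
      field_simp
    rw [e1, e2]
    have h1 : (δ + s) ^ (r - 1) ≤ (δ + t) ^ (r - 1) :=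
      rpow_le_rpow h.le (by linarith) (by linarith)
    have h2 : s / (δ + s) ≤ t / (δ + t) := by
      rw [div_le_div_iff₀ h hvt]
      nlinarith
    have h3 : 0 ≤ s / (δ + s) := by positivity
    exact mul_le_mul h1 h2 h3 (by positivity)

private lemma key2 {r u v : ℝ} (hr1 : 1 < r) (hr2 : r ≤ 2) (hu : 0 < u) (huv : u ≤ v) :
    2 * u ^ (r - 1) ≤ u ^ (r - 2) * v + v ^ (r - 2) * u := by
  have hv : 0 < v := lt_of_lt_of_le hu huv
  set ρ := v / u with hρdef
  have hρ0 : 0 < ρ := by positivity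
  have hρ1 : 1 ≤ ρ := (one_le_div hu).2 huv
  have hinv : ρ * ρ⁻¹ = 1 := mul_inv_cancel₀ hρ0.ne'
  have hAM : 2 ≤ ρ + ρ⁻¹ := by nlinarith [sq_nonneg (ρ - 1)]
  have hexp : ρ ^ (-1 : ℝ) ≤ ρ ^ (r - 2) :=
    rpow_le_rpow_of_exponent_le hρ1 (by linarith)
  rw [rpow_neg_one] at hexp
  have h2 : 2 ≤ ρ + ρ ^ (r - 2) := by linarith
  have hur1 : 0 < u ^ (r - 1) := rpow_pos_of_pos hu _
  have hmul := mul_le_mul_of_nonneg_right h2 hur1.le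
  have e0 : u ^ (r - 1) = u ^ (r - 2) * u := by
    rw [show r - 1 = (r - 2) + 1 by ring, rpow_add_one hu.ne']
  have e1 : ρ * u ^ (r - 1) = u ^ (r - 2) * v := by
    rw [e0, hρdef]; field_simp
  have e2 : ρ ^ (r - 2) * u ^ (r - 1) = v ^ (r - 2) * u := by
    rw [e0, hρdef, div_rpow hv.le hu.le]
    have hu2 : (0:ℝ) < u ^ (r - 2) := rpow_pos_of_pos hu _
    field_simp
  calc 2 * u ^ (r - 1) ≤ (ρ + ρ ^ (r - 2)) * u ^ (r - 1) := hmul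
    _ = ρ * u ^ (r - 1) + ρ ^ (r - 2) * u ^ (r - 1) := by ring
    _ = u ^ (r - 2) * v + v ^ (r - 2) * u := by rw [e1, e2]

/-- base comparison: if `0 < Q ≤ c * a` and `1 ≤ c` then `a^(r-2) ≤ c * Q^(r-2)`. -/
private lemma base_cmp {r Q a c : ℝ} (hr1 : 1 < r) (hr2 : r ≤ 2) (hQ : 0 < Q)
    (h : Q ≤ c * a) (hc : 1 ≤ c) : a ^ (r - 2) ≤ c * Q ^ (r - 2) := by
  have hc0 : 0 < c := by linarith
  have ha : 0 < a := by nlinarith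
  have h1 : Q / c ≤ a := (div_le_iff₀ hc0).2 (by linarith [h])
  have h2 : a ^ (r - 2) ≤ (Q / c) ^ (r - 2) :=
    rpow_le_rpow_of_nonpos (by positivity) h1 (by linarith)
  have h3 : (Q / c) ^ (r - 2) = Q ^ (r - 2) * c ^ (2 - r) := by
    rw [div_rpow hQ.le hc0.le, div_eq_mul_inv, ← rpow_neg hc0.le]
    ring_nf
  have h4 : c ^ (2 - r) ≤ c := by
    calc c ^ (2 - r) ≤ c ^ (1 : ℝ) := rpow_le_rpow_of_exponent_le hc (by linarith)
      _ = c := rpow_one c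
  calc a ^ (r - 2) ≤ (Q / c) ^ (r - 2) := h2
    _ = Q ^ (r - 2) * c ^ (2 - r) := h3
    _ ≤ Q ^ (r - 2) * c := by
        exact mul_le_mul_of_nonneg_left h4 (rpow_nonneg hQ.le _)
    _ = c * Q ^ (r - 2) := by ring

private lemma core_est {r : ℝ} (hr1 : 1 < r) (hr2 : r ≤ 2) {n : ℕ} {δ : ℝ} (hδ : 0 ≤ δ)
    (x y : EuclideanSpace ℝ (Fin n)) (hxy : ‖y‖ ≤ ‖x‖) :
    ‖((δ + ‖x‖) ^ (r - 2)) • x - ((δ + ‖y‖) ^ (r - 2)) • y‖ ≤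
      8 * (δ + ‖x‖ + ‖y‖) ^ (r - 2) * ‖x - y‖ := by
  set t := ‖x‖ with htdef
  set s := ‖y‖ with hsdef
  set D := ‖x - y‖ with hDdef
  have ht : 0 ≤ t := norm_nonneg x
  have hs : 0 ≤ s := norm_nonneg y
  have hD : 0 ≤ D := norm_nonneg _
  have habs : |t - s| ≤ D := abs_norm_sub_norm_le x y
  have hts : t - s ≤ D := le_trans (le_abs_self _) habs
  rcases eq_or_lt_of_le (by positivity : (0:ℝ) ≤ δ + t) with hvt | hvt
  · -- δ + ‖x‖ = 0 : everything is zero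
    have hδ0 : δ = 0 := by linarith
    have ht0 : t = 0 := by linarith
    have hs0 : s = 0 := by linarith
    have hx0 : x = 0 := norm_eq_zero.mp ht0
    have hy0 : y = 0 := norm_eq_zero.mp hs0
    simp only [hx0, hy0, smul_zero, sub_zero, norm_zero]
    positivity
  · have hQ : 0 < δ + t + s := by linarith
    have hQnn : 0 ≤ (δ + t + s) ^ (r - 2) := rpow_nonneg hQ.le _
    have hAcmp : (δ + t) ^ (r - 2) ≤ 2 * (δ + t + s) ^ (r - 2) :=
      base_cmp hr1 hr2 hQ (by linarith) (by norm_num)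
    by_cases hcase : t ≤ 2 * D
    · -- far apart case
      have h1 : ‖((δ + t) ^ (r - 2)) • x - ((δ + s) ^ (r - 2)) • y‖ ≤
          (δ + t) ^ (r - 2) * t + (δ + s) ^ (r - 2) * s := by
        refine le_trans (norm_sub_le _ _) ?_
        rw [norm_smul, norm_smul]
        simp only [Real.norm_eq_abs, abs_of_nonneg (rpow_nonneg (by linarith : (0:ℝ) ≤ δ + t) _),
          abs_of_nonneg (rpow_nonneg (by positivity : (0:ℝ) ≤ δ + s) _)]
        exact le_refl _
      have h2 : (δ + s) ^ (r - 2) * s ≤ (δ + t) ^ (r - 2) * t := gmono hr1 hδ hs hxy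
      have h3 : (δ + t) ^ (r - 2) * t ≤ 2 * (δ + t + s) ^ (r - 2) * (2 * D) := by
        calc (δ + t) ^ (r - 2) * t ≤ (2 * (δ + t + s) ^ (r - 2)) * (2 * D) := by
              apply mul_le_mul hAcmp hcase ht (by positivity)
          _ = 2 * (δ + t + s) ^ (r - 2) * (2 * D) := by ring
      calc ‖((δ + t) ^ (r - 2)) • x - ((δ + s) ^ (r - 2)) • y‖
          ≤ (δ + t) ^ (r - 2) * t + (δ + s) ^ (r - 2) * s := h1
        _ ≤ 2 * ((δ + t) ^ (r - 2) * t) := by linarith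
        _ ≤ 2 * (2 * (δ + t + s) ^ (r - 2) * (2 * D)) := by linarith
        _ = 8 * (δ + t + s) ^ (r - 2) * D := by ring
    · -- close case : 2 * D < t
      push_neg at hcase
      have hspos : t / 2 < s := by linarith [hts]
      have hupos : 0 < δ + s := by linarith
      set u := δ + s with hudef
      set v := δ + t with hvdef
      have huv : u ≤ v := by simp only [hudef, hvdef]; linarith
      have hBgeA : v ^ (r - 2) ≤ u ^ (r - 2) :=
        rpow_le_rpow_of_nonpos hupos huv (by linarith)
      have decomp : (v ^ (r - 2)) • x - (u ^ (r - 2)) • y =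
          (v ^ (r - 2)) • (x - y) + (v ^ (r - 2) - u ^ (r - 2)) • y := by
        rw [smul_sub, sub_smul]; abel
      have hnorm : ‖(v ^ (r - 2)) • x - (u ^ (r - 2)) • y‖ ≤
          v ^ (r - 2) * D + (u ^ (r - 2) - v ^ (r - 2)) * s := by
        rw [decomp]
        refine le_trans (norm_add_le _ _) ?_
        rw [norm_smul, norm_smul]
        simp only [Real.norm_eq_abs]
        rw [abs_of_nonneg (rpow_nonneg (by linarith : (0:ℝ) ≤ v) _),
          abs_of_nonpos (by linarith : v ^ (r - 2) - u ^ (r - 2) ≤ 0)]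
        simp only [neg_sub]
        rfl
      -- second term bound
      have hkey := key2 hr1 hr2 hupos huv
      have e0 : u ^ (r - 1) = u ^ (r - 2) * u := by
        rw [show r - 1 = (r - 2) + 1 by ring, rpow_add_one hupos.ne']
      have hterm2 : (u ^ (r - 2) - v ^ (r - 2)) * s ≤ u ^ (r - 2) * D := by
        have hsu : s ≤ u := by simp only [hudef]; linarith
        have h1 : (u ^ (r - 2) - v ^ (r - 2)) * s ≤ (u ^ (r - 2) - v ^ (r - 2)) * u :=
          mul_le_mul_of_nonneg_left hsu (by linarith)
        have h2 : (u ^ (r - 2) - v ^ (r - 2)) * u ≤ u ^ (r - 2) * (v - u) := by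
          rw [e0] at hkey; nlinarith [hkey]
        have h3 : v - u ≤ D := by simp only [hudef, hvdef]; linarith
        have h4 : u ^ (r - 2) * (v - u) ≤ u ^ (r - 2) * D :=
          mul_le_mul_of_nonneg_left h3 (rpow_nonneg hupos.le _)
        linarith
      have hucmp : u ^ (r - 2) ≤ 3 * (δ + t + s) ^ (r - 2) :=
        base_cmp hr1 hr2 hQ (by simp only [hudef]; linarith) (by norm_num)
      calc ‖(v ^ (r - 2)) • x - (u ^ (r - 2)) • y‖
          ≤ v ^ (r - 2) * D + (u ^ (r - 2) - v ^ (r - 2)) * s := hnorm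
        _ ≤ 2 * (δ + t + s) ^ (r - 2) * D + u ^ (r - 2) * D := by
            have := mul_le_mul_of_nonneg_right hAcmp hD
            linarith
        _ ≤ 2 * (δ + t + s) ^ (r - 2) * D + 3 * (δ + t + s) ^ (r - 2) * D := by
            have := mul_le_mul_of_nonneg_right hucmp hD
            linarith
        _ = 5 * (δ + t + s) ^ (r - 2) * D := by ring
        _ ≤ 8 * (δ + t + s) ^ (r - 2) * D := by nlinarith [mul_nonneg hQnn hD]

/-- Hölder continuity of the `(δ,r)`-regularized power-framed function
`x ↦ (δ + ‖x‖)^(r−2) x` for `r ∈ (1,2]`, with a constant depending only on `r`: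
`|(δ+‖x‖)^(r−2) x − (δ+‖y‖)^(r−2) y| ≤ C (δ^r + ‖x‖^r + ‖y‖^r)^((r−2)/r) ‖x−y‖`. -/
theorem regularized_power_framed_holder_continuity (r : ℝ) (hr1 : 1 < r) (hr2 : r ≤ 2) :
    ∃ C > 0, ∀ (n : ℕ), 0 < n → ∀ (δ : ℝ), 0 ≤ δ →
      ∀ x y : EuclideanSpace ℝ (Fin n),
        ‖((δ + ‖x‖) ^ (r - 2)) • x - ((δ + ‖y‖) ^ (r - 2)) • y‖ ≤
          C * (δ ^ r + ‖x‖ ^ r + ‖y‖ ^ r) ^ ((r - 2) / r) * ‖x - y‖ := by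
  have hrpos : (0:ℝ) < r := by linarith
  refine ⟨8, by norm_num, ?_⟩
  intro n _hn δ hδ x y
  -- reduce to the case of the Q-estimate
  have main : ∀ x y : EuclideanSpace ℝ (Fin n), ‖y‖ ≤ ‖x‖ →
      ‖((δ + ‖x‖) ^ (r - 2)) • x - ((δ + ‖y‖) ^ (r - 2)) • y‖ ≤
        8 * (δ ^ r + ‖x‖ ^ r + ‖y‖ ^ r) ^ ((r - 2) / r) * ‖x - y‖ := by
    intro x y hxy
    set t := ‖x‖
    set s := ‖y‖
    have ht : 0 ≤ t := norm_nonneg x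
    have hs : 0 ≤ s := norm_nonneg y
    rcases eq_or_lt_of_le (by positivity : (0:ℝ) ≤ δ + t + s) with hQ | hQ
    · have hδ0 : δ = 0 := by linarith
      have ht0 : t = 0 := by linarith
      have hs0 : s = 0 := by linarith
      have hx0 : x = 0 := norm_eq_zero.mp ht0
      have hy0 : y = 0 := norm_eq_zero.mp hs0
      simp only [hx0, hy0, smul_zero, sub_zero, norm_zero]
      positivity
    · have hK : δ ^ r + t ^ r + s ^ r ≤ (δ + t + s) ^ r := by
        have h1 : δ ^ r + t ^ r ≤ (δ + t) ^ r := real_add_rpow hδ ht (by linarith)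
        have h2 : (δ + t) ^ r + s ^ r ≤ (δ + t + s) ^ r :=
          real_add_rpow (by linarith) hs (by linarith)
        linarith
      have hKpos : 0 < δ ^ r + t ^ r + s ^ r := by
        rcases lt_trichotomy δ 0 with h | h | h
        · linarith
        · rcases eq_or_lt_of_le ht with h2 | h2
          · have hs2 : 0 < s := by rw [← h, ← h2] at hQ; linarith
            have := rpow_pos_of_pos hs2 r
            have h3 := rpow_nonneg hδ r
            have h4 := rpow_nonneg ht r
            linarith
          · have := rpow_pos_of_pos h2 r
            have h3 := rpow_nonneg hδ r
            have h4 := rpow_nonneg hs r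
            linarith
        · have := rpow_pos_of_pos h r
          have h3 := rpow_nonneg ht r
          have h4 := rpow_nonneg hs r
          linarith
      have hconv : (δ + t + s) ^ (r - 2) ≤ (δ ^ r + t ^ r + s ^ r) ^ ((r - 2) / r) := by
        have h1 : ((δ + t + s) ^ r) ^ ((r - 2) / r) ≤
            (δ ^ r + t ^ r + s ^ r) ^ ((r - 2) / r) :=
          rpow_le_rpow_of_nonpos hKpos hK
            (div_nonpos_of_nonpos_of_nonneg (by linarith) hrpos.le)
        have h2 : ((δ + t + s) ^ r) ^ ((r - 2) / r) = (δ + t + s) ^ (r - 2) := by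
          rw [← rpow_mul hQ.le]
          congr 1
          field_simp
        linarith [h1, h2.symm.le]
      have hcore := core_est hr1 hr2 hδ x y hxy
      have hD : 0 ≤ ‖x - y‖ := norm_nonneg _
      calc ‖((δ + t) ^ (r - 2)) • x - ((δ + s) ^ (r - 2)) • y‖
          ≤ 8 * (δ + t + s) ^ (r - 2) * ‖x - y‖ := hcore
        _ ≤ 8 * (δ ^ r + t ^ r + s ^ r) ^ ((r - 2) / r) * ‖x - y‖ := by
            have := mul_le_mul_of_nonneg_right hconv hD
            nlinarith [this]
  rcases le_total ‖y‖ ‖x‖ with h | h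
  · exact main x y h
  · have := main y x h
    rw [norm_sub_rev y x, norm_sub_rev] at this
    have e : δ ^ r + ‖y‖ ^ r + ‖x‖ ^ r = δ ^ r + ‖x‖ ^ r + ‖y‖ ^ r := by ring
    rw [e] at this
    exact this
end
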